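/- arXiv:2005.13996 — 4 statements merged into one kernel-verified Lean document; each statement's English description precedes it below -/
import Mathlib

section
/- Suppose a single agent with m >= 2 options uses MWU with step-size eps > 0, starting from a point y^0 in the interior of Delta^m, where the payoff to option k at round t is a_k + delta_k^t with: (i) each a_k in [-1,1]; (ii) there exists alpha2 > 0 such that a_{k-1} - a_k >= alpha2 for all 2 <= k <= m; (iii) there exists 0 < delta <= alpha2/8 such that delta_k^t in [-2 delta, 2 delta] for all k, t. Let khat(t) := min{ k in [m] : y_k^t > delta/(m-1) } and T := ceil( (2/(eps (alpha2 - 4 delta))) ln((m-1)/delta) ). Then: (i) for any tau >= 0, if y^{tau+T} has more than one entry greater than delta/(m-1), then khat(tau+T) <= khat(tau) - 1; and (ii) there exists a time t <= (m-1) T such that some entry of y^t is at least 1 - delta. -/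
/-!
Under multiplicative weights the ratio `y_l / y_k` of two options is multiplied by
`exp (ε (u_l - u_k))` in each round. For `k < l` the perturbed payoffs keep a gap of at least
`α2 - 4δ`, so over `T` rounds the ratio shrinks by a factor at most `κ²`, where `κ = δ / (m - 1)`.
Hence if `y_k > κ` at time `τ`, every option `l > k` is at most `κ` at time `τ + T`: while two
entries exceed `κ`, the first index above `κ` moves strictly left every `T` rounds. It starts at
most at `m - 2`, so within `(m - 1) T` rounds at most one entry exceeds `κ`, and that entry is then
at least `1 - (m - 1) κ = 1 - δ`.
-/

open MeasureTheory Filter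

noncomputable def softmax {d : ℕ} (p : Fin d → ℝ) : Fin d → ℝ :=
  fun j => Real.exp (p j) / ∑ l, Real.exp (p l)

noncomputable def G {n m : ℕ} (pq : (Fin n → ℝ) × (Fin m → ℝ)) :
    (Fin n → ℝ) × (Fin m → ℝ) :=
  (softmax pq.1, softmax pq.2)

noncomputable def Cfun {n m : ℕ} (A B : Matrix (Fin n) (Fin m) ℝ)
    (x : Fin n → ℝ) (y : Fin m → ℝ) : ℝ :=
  -∑ j, ∑ k, x j * y k * (A j k - A.mulVec y j) * (B j k - B.transpose.mulVec x k)

noncomputable def mwuStep {n m : ℕ} (A B : Matrix (Fin n) (Fin m) ℝ) (ε : ℝ)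
    (xy : (Fin n → ℝ) × (Fin m → ℝ)) : (Fin n → ℝ) × (Fin m → ℝ) :=
  (fun j => xy.1 j * Real.exp (ε * A.mulVec xy.2 j) /
      ∑ l, xy.1 l * Real.exp (ε * A.mulVec xy.2 l),
   fun k => xy.2 k * Real.exp (ε * B.transpose.mulVec xy.1 k) /
      ∑ l, xy.2 l * Real.exp (ε * B.transpose.mulVec xy.1 l))

noncomputable def mwuDual {n m : ℕ} (A B : Matrix (Fin n) (Fin m) ℝ) (ε : ℝ)
    (pq : (Fin n → ℝ) × (Fin m → ℝ)) : (Fin n → ℝ) × (Fin m → ℝ) :=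
  (fun j => pq.1 j + ε * A.mulVec (softmax pq.2) j,
   fun k => pq.2 k + ε * B.transpose.mulVec (softmax pq.1) k)

def primalSpace (n m : ℕ) : Set ((Fin n → ℝ) × (Fin m → ℝ)) :=
  {xy | xy.1 ∈ stdSimplex ℝ (Fin n) ∧ xy.2 ∈ stdSimplex ℝ (Fin m)}

def primalInterior (n m : ℕ) : Set ((Fin n → ℝ) × (Fin m → ℝ)) :=
  {xy | ((∑ j, xy.1 j) = 1 ∧ ∀ j, 0 < xy.1 j) ∧ ((∑ k, xy.2 k) = 1 ∧ ∀ k, 0 < xy.2 k)}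

noncomputable def ctriv {I J : Type*} [Fintype I] [Fintype J]
    (M : Matrix I J ℝ) : ℝ :=
  ⨅ a : I → ℝ, ⨅ b : J → ℝ,
    ((⨆ jk : I × J, (M jk.1 jk.2 - a jk.1 - b jk.2)) -
     (⨅ jk : I × J, (M jk.1 jk.2 - a jk.1 - b jk.2)))

def extremalDomain {n m : ℕ} (δ : ℝ) : Set ((Fin n → ℝ) × (Fin m → ℝ)) :=
  {xy | xy ∈ primalSpace n m ∧ (∃! j, 1 - δ ≤ xy.1 j) ∧ (∃! k, 1 - δ ≤ xy.2 k)}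

def Eset {n m : ℕ} (κ : ℝ) : Set ((Fin n → ℝ) × (Fin m → ℝ)) :=
  {xy | xy ∈ primalSpace n m ∧
    (∃ j1 j2, j1 ≠ j2 ∧ κ < xy.1 j1 ∧ κ < xy.1 j2) ∧
    (∃ k1 k2, k1 ≠ k2 ∧ κ < xy.2 k1 ∧ κ < xy.2 k2)}

noncomputable def dist2 {n m : ℕ} (u w : (Fin n → ℝ) × (Fin m → ℝ)) : ℝ :=
  Real.sqrt ((∑ j, (u.1 j - w.1 j)^2) + (∑ k, (u.2 k - w.2 k)^2))

noncomputable def diam2 {n m : ℕ} (S : Set ((Fin n → ℝ) × (Fin m → ℝ))) : ℝ :=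
  sSup {d | ∃ u ∈ S, ∃ w ∈ S, d = dist2 u w}

noncomputable def omwuPairStep {n m : ℕ} (A B : Matrix (Fin n) (Fin m) ℝ) (ε : ℝ)
    (s : ((Fin n → ℝ) × (Fin m → ℝ)) × ((Fin n → ℝ) × (Fin m → ℝ))) :
    ((Fin n → ℝ) × (Fin m → ℝ)) × ((Fin n → ℝ) × (Fin m → ℝ)) :=
  ((fun j => s.1.1 j + ε * (2 * A.mulVec (softmax s.1.2) j - A.mulVec (softmax s.2.2) j),
    fun k => s.1.2 k + ε * (2 * B.transpose.mulVec (softmax s.1.1) k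
        - B.transpose.mulVec (softmax s.2.1) k)),
   s.1)

noncomputable def omwuIter {n m : ℕ} (A B : Matrix (Fin n) (Fin m) ℝ) (ε : ℝ)
    (t : ℕ) (pq : (Fin n → ℝ) × (Fin m → ℝ)) : (Fin n → ℝ) × (Fin m → ℝ) :=
  ((omwuPairStep A B ε)^[t] (pq, pq)).2

noncomputable def gameValue {n m : ℕ} (A : Matrix (Fin n) (Fin m) ℝ) : ℝ :=
  ⨆ x ∈ stdSimplex ℝ (Fin n), ⨅ y ∈ stdSimplex ℝ (Fin m), ∑ j, ∑ k, x j * A j k * y k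

def subTrivSet {n m : ℕ} (A : Matrix (Fin n) (Fin m) ℝ) : Set ℝ :=
  {r | ∃ j1 j2 : Fin n, ∃ k1 k2 : Fin m, j1 ≠ j2 ∧ k1 ≠ k2 ∧
    r = ctriv (A.submatrix ![j1, j2] ![k1, k2])}

def entryGapSet {n m : ℕ} (A : Matrix (Fin n) (Fin m) ℝ) : Set ℝ :=
  {r | (∃ j : Fin n, ∃ k1 k2 : Fin m, k1 ≠ k2 ∧ r = |A j k1 - A j k2|) ∨
       (∃ j1 j2 : Fin n, ∃ k : Fin m, j1 ≠ j2 ∧ r = |A j1 k - A j2 k|)}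

open Finset Real

theorem sum_mul_exp_pos {ι : Type*} [Fintype ι] [Nonempty ι] {v w : ι → ℝ}
    (hv : ∀ k, 0 < v k) : 0 < ∑ k, v k * exp (w k) :=
  sum_pos (fun k _ => mul_pos (hv k) (exp_pos _)) univ_nonempty

theorem exists_lt_of_sum_eq_one {ι : Type*} [Fintype ι] {v : ι → ℝ} (hv : ∑ k, v k = 1)
    {κ : ℝ} (hκ : Fintype.card ι * κ < 1) : ∃ k, κ < v k := by
  obtain ⟨k, -, hk⟩ := exists_lt_of_sum_lt (s := univ) (f := fun _ => κ) (g := v)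
    (by simpa [hv] using hκ)
  exact ⟨k, hk⟩

theorem exists_ne_lt_of_sum_eq_one {ι : Type*} [Fintype ι] {v : ι → ℝ} (hv : ∑ k, v k = 1)
    {κ : ℝ} (hlt : ∀ k, v k < 1 - (Fintype.card ι - 1) * κ) :
    ∃ k₁ k₂, k₁ ≠ k₂ ∧ κ < v k₁ ∧ κ < v k₂ := by
  classical
  have hne : (univ : Finset ι).Nonempty := by
    by_contra h
    simp [not_nonempty_iff_eq_empty.1 h] at hv
  obtain ⟨k₁, -, hmax⟩ := exists_max_image univ v hne
  by_contra! hsmall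
  have hrest : ∑ k ∈ univ.erase k₁, v k ≤ (Fintype.card ι - 1) * κ := by
    calc ∑ k ∈ univ.erase k₁, v k ≤ #(univ.erase k₁) • κ := by
          refine sum_le_card_nsmul _ _ _ fun k hk => ?_
          by_contra! hk'
          exact (hsmall k₁ k (ne_of_mem_erase hk).symm
            (hk'.trans_le (hmax k (mem_univ k)))).not_gt hk'
      _ = (Fintype.card ι - 1) * κ := by
          rw [card_erase_of_mem (mem_univ _), card_univ, nsmul_eq_mul,
            Nat.cast_pred (Fintype.card_pos_iff.2 ⟨k₁⟩)]
  have := add_sum_erase univ v (mem_univ k₁)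
  linarith [hlt k₁]

theorem add_le_of_forall_succ_lt {f : ℕ → ℕ} {n : ℕ} (h : ∀ j < n, f (j + 1) < f j) :
    f n + n ≤ f 0 := by
  induction n with
  | zero => simp
  | succ n ih =>
    have := h n n.lt_succ_self
    have := ih fun j hj => h j (hj.trans n.lt_succ_self)
    omega

theorem exp_neg_mul_ceil_le {c a b : ℝ} (hc : 0 < c) (ha : 0 < a) (hb : 0 < b) :
    exp (-(c * ⌈(2 / c) * log (b / a)⌉₊)) ≤ (a / b) ^ 2 := by
  set x := b / a
  have hx : 0 < x := div_pos hb ha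
  have hceil : 2 * log x ≤ c * ⌈(2 / c) * log x⌉₊ := by
    calc 2 * log x = c * ((2 / c) * log x) := by field_simp
      _ ≤ c * ⌈(2 / c) * log x⌉₊ := mul_le_mul_of_nonneg_left (Nat.le_ceil _) hc.le
  calc exp (-(c * ⌈(2 / c) * log x⌉₊)) ≤ exp (-(2 * log x)) := exp_le_exp.2 (by linarith)
    _ = (a / b) ^ 2 := by
      rw [← inv_div, show -(2 * log x) = log (x⁻¹ ^ 2) by rw [log_pow, log_inv]; push_cast; ring,
        exp_log (by positivity)]

theorem Fin.add_mul_le_of_forall_le_sub_succ {m : ℕ} {f : Fin m → ℝ} {α : ℝ}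
    (h : ∀ k : Fin m, ∀ hk : (k : ℕ) + 1 < m, α ≤ f k - f ⟨k + 1, hk⟩) {k l : Fin m}
    (hkl : k ≤ l) : f l + ((l : ℕ) - (k : ℕ) : ℕ) * α ≤ f k := by
  suffices ∀ d (hd : (k : ℕ) + d < m), f ⟨k + d, hd⟩ + d * α ≤ f k by
    simpa [Nat.add_sub_cancel' (Fin.le_def.1 hkl)] using this ((l : ℕ) - k) (by omega)
  intro d
  induction d with
  | zero => simp
  | succ d ih =>
    intro hd
    have := h ⟨k + d, by omega⟩ hd
    have := ih (by omega)
    push_cast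
    simp only [← add_assoc] at *
    linarith

section MWU

variable {ι : Type*} [Fintype ι]

def IsMWU (ε : ℝ) (u y : ℕ → ι → ℝ) : Prop :=
  ∀ t k, y (t + 1) k = y t k * exp (ε * u t k) / ∑ l, y t l * exp (ε * u t l)

namespace IsMWU

variable [Nonempty ι] {ε : ℝ} {u y : ℕ → ι → ℝ}

theorem pos (h : IsMWU ε u y) (h0 : ∀ k, 0 < y 0 k) : ∀ t k, 0 < y t k := by
  intro t
  induction t with
  | zero => exact h0
  | succ t ih =>
    intro k
    rw [h t k]
    exact div_pos (mul_pos (ih k) (exp_pos _)) (sum_mul_exp_pos ih)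

theorem sum_eq_one (h : IsMWU ε u y) (h0 : ∀ k, 0 < y 0 k) (h1 : ∑ k, y 0 k = 1) :
    ∀ t, ∑ k, y t k = 1
  | 0 => h1
  | t + 1 => by
    simp only [h t, ← sum_div]
    exact div_self (sum_mul_exp_pos (h.pos h0 t)).ne'

theorem div_succ (h : IsMWU ε u y) {t : ℕ} (hy : ∀ k, 0 < y t k) (k l : ι) :
    y (t + 1) l / y (t + 1) k = y t l / y t k * exp (ε * (u t l - u t k)) := by
  have hD := (sum_mul_exp_pos (w := fun l => ε * u t l) hy).ne'
  have := (hy k).ne'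
  rw [h t l, h t k, mul_sub, exp_sub]
  field_simp

theorem div_le_mul_exp_of_gap (h : IsMWU ε u y) (hpos : ∀ t k, 0 < y t k) (hε : 0 ≤ ε)
    {g : ℝ} {k l : ι} (hgap : ∀ t, u t l + g ≤ u t k) (t : ℕ) :
    ∀ s : ℕ, y (t + s) l / y (t + s) k ≤ y t l / y t k * exp (-(ε * g * s))
  | 0 => by simp
  | s + 1 => by
    have hstep : exp (ε * (u (t + s) l - u (t + s) k)) ≤ exp (-(ε * g)) :=
      exp_le_exp.2 (by nlinarith [hgap (t + s)])
    calc y (t + (s + 1)) l / y (t + (s + 1)) k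
        = y (t + s) l / y (t + s) k * exp (ε * (u (t + s) l - u (t + s) k)) :=
          h.div_succ (hpos _) k l
      _ ≤ y t l / y t k * exp (-(ε * g * s)) * exp (-(ε * g)) :=
          mul_le_mul (div_le_mul_exp_of_gap h hpos hε hgap t s) hstep (exp_pos _).le
            (by have := hpos t l; have := hpos t k; positivity)
      _ = y t l / y t k * exp (-(ε * g * ↑(s + 1))) := by
          rw [mul_assoc, ← exp_add]; push_cast; ring_nf

theorem le_of_lt_of_gap (h : IsMWU ε u y) (hpos : ∀ t k, 0 < y t k)
    (hsum : ∀ t, ∑ k, y t k = 1) (hε : 0 ≤ ε) {g : ℝ} {k l : ι}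
    (hgap : ∀ t, u t l + g ≤ u t k) {κ : ℝ} (hκ : 0 < κ) {τ T : ℕ}
    (hT : exp (-(ε * g * T)) ≤ κ ^ 2) (hk : κ < y τ k) : y (τ + T) l ≤ κ := by
  have hle_one : ∀ t k, y t k ≤ 1 := fun t k =>
    hsum t ▸ single_le_sum (fun l _ => (hpos t l).le) (mem_univ k)
  have hratio : y (τ + T) l / y (τ + T) k ≤ 1 / κ * κ ^ 2 :=
    calc y (τ + T) l / y (τ + T) k ≤ y τ l / y τ k * exp (-(ε * g * T)) :=
          h.div_le_mul_exp_of_gap hpos hε hgap τ T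
      _ ≤ 1 / κ * κ ^ 2 := mul_le_mul (div_le_div₀ zero_le_one (hle_one τ l) hκ hk.le) hT
          (exp_pos _).le (by positivity)
  calc y (τ + T) l = y (τ + T) k * (y (τ + T) l / y (τ + T) k) := by
        rw [mul_div_cancel₀ _ (hpos _ k).ne']
    _ ≤ 1 * (1 / κ * κ ^ 2) := mul_le_mul (hle_one _ _) hratio
      (div_pos (hpos _ _) (hpos _ _)).le zero_le_one
    _ = κ := by field_simp

end IsMWU

end MWU

-- the paper's `khat`; junk value `0` when no entry exceeds `κ`, since `sInf ∅ = 0`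
noncomputable def firstAbove {m : ℕ} (κ : ℝ) (v : Fin m → ℝ) : ℕ :=
  sInf {k : ℕ | ∃ h : k < m, κ < v ⟨k, h⟩}

section firstAbove

variable {m : ℕ} {κ : ℝ} {v : Fin m → ℝ}

theorem firstAbove_le {k : Fin m} (hk : κ < v k) : firstAbove κ v ≤ k :=
  Nat.sInf_le ⟨k.isLt, hk⟩

theorem exists_lt_firstAbove (h : ∃ k, κ < v k) :
    ∃ hlt : firstAbove κ v < m, κ < v ⟨firstAbove κ v, hlt⟩ := by
  obtain ⟨k, hk⟩ := h
  exact Nat.sInf_mem (s := {k : ℕ | ∃ h : k < m, κ < v ⟨k, h⟩}) ⟨k, k.isLt, hk⟩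

theorem firstAbove_lt_max {k₁ k₂ : Fin m} (hne : k₁ ≠ k₂) (h₁ : κ < v k₁) (h₂ : κ < v k₂) :
    firstAbove κ v < max (k₁ : ℕ) k₂ := by
  have := firstAbove_le h₁
  have := firstAbove_le h₂
  have := Fin.val_ne_of_ne hne
  omega

end firstAbove

theorem IsMWU.firstAbove_add_lt {m : ℕ} {ε : ℝ} {u y : ℕ → Fin m → ℝ} (h : IsMWU ε u y)
    (hpos : ∀ t k, 0 < y t k) (hsum : ∀ t, ∑ k, y t k = 1) (hε : 0 ≤ ε) {g : ℝ}
    (hgap : ∀ t (k l : Fin m), k < l → u t l + g ≤ u t k) {κ : ℝ} (hκ : 0 < κ) {τ T : ℕ}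
    (hT : exp (-(ε * g * T)) ≤ κ ^ 2) (hbig : ∃ k, κ < y τ k)
    (htwo : ∃ k₁ k₂, k₁ ≠ k₂ ∧ κ < y (τ + T) k₁ ∧ κ < y (τ + T) k₂) :
    firstAbove κ (y (τ + T)) < firstAbove κ (y τ) := by
  obtain ⟨hlt, hk₀⟩ := exists_lt_firstAbove hbig
  have : Nonempty (Fin m) := ⟨⟨_, hlt⟩⟩
  have hle : ∀ k, κ < y (τ + T) k → (k : ℕ) ≤ firstAbove κ (y τ) := fun k hk => by
    by_contra! hgt
    exact hk.not_ge (h.le_of_lt_of_gap hpos hsum hε (hgap · _ k hgt) hκ hT hk₀)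
  obtain ⟨k₁, k₂, hne, h₁, h₂⟩ := htwo
  exact (firstAbove_lt_max hne h₁ h₂).trans_le (max_le (hle k₁ h₁) (hle k₂ h₂))

theorem exists_one_sub_le_of_firstAbove_add_lt {m T : ℕ} {y : ℕ → Fin m → ℝ}
    (hsum : ∀ t, ∑ k, y t k = 1) {κ : ℝ}
    (hdesc : ∀ τ, (∃ k₁ k₂, k₁ ≠ k₂ ∧ κ < y (τ + T) k₁ ∧ κ < y (τ + T) k₂) →
      firstAbove κ (y (τ + T)) < firstAbove κ (y τ)) :
    ∃ t ≤ (m - 1) * T, ∃ k, 1 - ((m : ℝ) - 1) * κ ≤ y t k := by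
  by_contra! hsmall
  have htwo : ∀ t ≤ (m - 1) * T, ∃ k₁ k₂, k₁ ≠ k₂ ∧ κ < y t k₁ ∧ κ < y t k₂ := fun t ht =>
    exists_ne_lt_of_sum_eq_one (hsum t) (by simpa using hsmall t ht)
  have hchain := add_le_of_forall_succ_lt (f := fun j => firstAbove κ (y (j * T)))
    (n := m - 1) fun j hj => by
      have hstep := hdesc (j * T)
      rw [← Nat.succ_mul] at hstep
      exact hstep (htwo _ (Nat.mul_le_mul_right T hj))
  obtain ⟨k₁, k₂, hne, h₁, h₂⟩ := htwo 0 (Nat.zero_le _)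
  have := firstAbove_lt_max hne h₁ h₂
  simp only [zero_mul] at hchain
  omega

theorem perturbed_add_le_of_gap {m : ℕ} {a p : Fin m → ℝ} {α δ : ℝ} (hα : 0 ≤ α)
    (hgap : ∀ k : Fin m, ∀ h : (k : ℕ) + 1 < m, α ≤ a k - a ⟨(k : ℕ) + 1, h⟩)
    (hp : ∀ k, p k ∈ Set.Icc (-(2 * δ)) (2 * δ)) {k l : Fin m} (hkl : k < l) :
    a l + p l + (α - 4 * δ) ≤ a k + p k := by
  have hdist : (1 : ℝ) ≤ ((l : ℕ) - (k : ℕ) : ℕ) := by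
    exact_mod_cast Nat.le_sub_of_add_le' (Fin.lt_def.1 hkl)
  have := Fin.add_mul_le_of_forall_le_sub_succ hgap hkl.le
  have := le_mul_of_one_le_left hα hdist
  linarith [(hp k).1, (hp l).2]

theorem mwu_single_agent_single_minded_general
    (m : ℕ) (hm : 2 ≤ m) (ε : ℝ) (hε : 0 < ε)
    (a : Fin m → ℝ) (ha : ∀ k, a k ∈ Set.Icc (-1 : ℝ) 1)
    (α2 : ℝ)
    (hgap : ∀ k : Fin m, ∀ h : (k : ℕ) + 1 < m, α2 ≤ a k - a ⟨(k : ℕ) + 1, h⟩)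
    (δ : ℝ) (hδ0 : 0 < δ) (hδ : δ ≤ α2 / 8)
    (pert : ℕ → Fin m → ℝ)
    (hpert : ∀ t k, pert t k ∈ Set.Icc (-(2 * δ)) (2 * δ))
    (y : ℕ → Fin m → ℝ)
    (hy0 : (∑ k, y 0 k) = 1 ∧ ∀ k, 0 < y 0 k)
    (hupd : ∀ t k, y (t + 1) k =
      y t k * Real.exp (ε * (a k + pert t k)) /
        ∑ l, y t l * Real.exp (ε * (a l + pert t l)))
    (khat : ℕ → ℕ)
    (hkhat : ∀ t, khat t = sInf {k : ℕ | ∃ h : k < m, δ / ((m : ℝ) - 1) < y t ⟨k, h⟩})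
    (T : ℕ)
    (hT : T = ⌈(2 / (ε * (α2 - 4 * δ))) * Real.log (((m : ℝ) - 1) / δ)⌉₊) :
    (∀ τ : ℕ,
      (∃ k1 k2 : Fin m, k1 ≠ k2 ∧ δ / ((m : ℝ) - 1) < y (τ + T) k1 ∧
          δ / ((m : ℝ) - 1) < y (τ + T) k2) →
      khat (τ + T) + 1 ≤ khat τ) ∧
    (∃ t ≤ (m - 1) * T, ∃ k : Fin m, 1 - δ ≤ y t k) := by
  have hm1 : (1 : ℝ) ≤ m - 1 := by
    have : (2 : ℝ) ≤ m := by exact_mod_cast hm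
    linarith
  have : Nonempty (Fin m) := ⟨⟨0, by omega⟩⟩
  -- `δ ≤ α2 / 8 ≤ 1 / 4` gives `m κ < 1`, so some entry always exceeds `κ`
  have hα2_le_two : α2 ≤ 2 := by
    have h01 := hgap ⟨0, by omega⟩ (by simp only; omega)
    linarith [(ha ⟨0, by omega⟩).2, (ha ⟨0 + 1, by omega⟩).1]
  set κ := δ / ((m : ℝ) - 1)
  have hκ : 0 < κ := div_pos hδ0 (by linarith)
  have hδκ : ((m : ℝ) - 1) * κ = δ := mul_div_cancel₀ δ (by linarith)
  have hmκ : (Fintype.card (Fin m) : ℝ) * κ < 1 := by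
    have : κ ≤ δ := div_le_self hδ0.le hm1
    rw [Fintype.card_fin, show (m : ℝ) * κ = δ + κ by linear_combination hδκ]
    linarith
  have hmwu : IsMWU ε (fun t k => a k + pert t k) y := hupd
  have hpos := hmwu.pos hy0.2
  have hsum := hmwu.sum_eq_one hy0.2 hy0.1
  have hT' : exp (-(ε * (α2 - 4 * δ) * T)) ≤ κ ^ 2 := by
    rw [hT]
    exact exp_neg_mul_ceil_le (mul_pos hε (by linarith)) hδ0 (by linarith)
  have hdesc : ∀ τ, (∃ k₁ k₂, k₁ ≠ k₂ ∧ κ < y (τ + T) k₁ ∧ κ < y (τ + T) k₂) →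
      firstAbove κ (y (τ + T)) < firstAbove κ (y τ) := fun τ =>
    hmwu.firstAbove_add_lt hpos hsum hε.le
      (fun t k l hkl => perturbed_add_le_of_gap (by linarith) hgap (hpert t) hkl) hκ hT'
      (exists_lt_of_sum_eq_one (hsum τ) hmκ)
  refine ⟨fun τ htwo => ?_, hδκ ▸ exists_one_sub_le_of_firstAbove_add_lt hsum hdesc⟩
  rw [hkhat, hkhat]
  exact hdesc τ htwo

/-- Single-agent MWU becomes single-minded (Lemma on extremism). -/
theorem mwu_single_agent_single_minded
    (m : ℕ) (hm : 2 ≤ m) (ε : ℝ) (hε : 0 < ε)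
    (a : Fin m → ℝ) (ha : ∀ k, a k ∈ Set.Icc (-1 : ℝ) 1)
    (α2 : ℝ) (hα2 : 0 < α2)
    (hgap : ∀ k : Fin m, ∀ h : (k : ℕ) + 1 < m, α2 ≤ a k - a ⟨(k : ℕ) + 1, h⟩)
    (δ : ℝ) (hδ0 : 0 < δ) (hδ : δ ≤ α2 / 8)
    (pert : ℕ → Fin m → ℝ)
    (hpert : ∀ t k, pert t k ∈ Set.Icc (-(2 * δ)) (2 * δ))
    (y : ℕ → Fin m → ℝ)
    (hy0 : (∑ k, y 0 k) = 1 ∧ ∀ k, 0 < y 0 k)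
    (hupd : ∀ t k, y (t + 1) k =
      y t k * Real.exp (ε * (a k + pert t k)) /
        ∑ l, y t l * Real.exp (ε * (a l + pert t l)))
    (khat : ℕ → ℕ)
    (hkhat : ∀ t, khat t = sInf {k : ℕ | ∃ h : k < m, δ / ((m : ℝ) - 1) < y t ⟨k, h⟩})
    (T : ℕ)
    (hT : T = ⌈(2 / (ε * (α2 - 4 * δ))) * Real.log (((m : ℝ) - 1) / δ)⌉₊) :
    (∀ τ : ℕ,
      (∃ k1 k2 : Fin m, k1 ≠ k2 ∧ δ / ((m : ℝ) - 1) < y (τ + T) k1 ∧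
          δ / ((m : ℝ) - 1) < y (τ + T) k2) →
      khat (τ + T) + 1 ≤ khat τ) ∧
    (∃ t ≤ (m - 1) * T, ∃ k : Fin m, 1 - δ ≤ y t k) :=
  mwu_single_agent_single_minded_general m hm ε hε a ha α2 hgap δ hδ0 hδ pert hpert y hy0 hupd khat
    hkhat T hT
end

section
/- Let (A,-A) be a two-person zero-sum game with entries of A in [-1,1] such that every 2x2 submatrix of A is non-trivial, and let alpha1 > 0 be the minimum of the distance from triviality c(A') over all 2x2 submatrices A' of A. Then for any 0 < kappa < 1/2 and every (x,y) in E^kappa_{2,2}, one has C_{(A,-A)}(x,y) >= kappa^2 alpha1^2 / 2; in particular E^kappa_{2,2} is uncontrollable. -/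
open MeasureTheory Filter

/-!
With `r = A *ᵥ y`, `c = Aᵀ *ᵥ x` and `v = x ⬝ᵥ A *ᵥ y`, the matrix
`u j k = A j k - r j - c k + v` is `A` doubly centred with respect to the weights `x` and `y`,
and `C_{(A,-A)}(x,y) = ∑ j k, x j * y k * u j k ^ 2`. The centring terms cancel in the
alternating sum `d` of a `2 × 2` block, so on a block whose four entries carry weight at least
`κ ^ 2` Cauchy–Schwarz gives `C ≥ κ ^ 2 d ^ 2 / 4`; and `|d| ≥ 2 c(A')` because an additive
`a_j + b_k` fit leaves residuals `± d / 4` on the block.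
-/

open Finset Matrix

section WeightedSums

variable {ι τ : Type*} [Fintype ι] [Fintype τ]

lemma sum_sum_mul_eq_zero_of_row (x : ι → ℝ) {y : τ → ℝ} {f : ι → τ → ℝ}
    (h : ∀ j, ∑ k, y k * f j k = 0) (g : ι → ℝ) :
    ∑ j, ∑ k, x j * y k * (f j k * g j) = 0 := by
  refine sum_eq_zero fun j _ => ?_
  calc ∑ k, x j * y k * (f j k * g j) = x j * g j * ∑ k, y k * f j k := by
        rw [mul_sum]; exact sum_congr rfl fun k _ => by ring
    _ = 0 := by rw [h j, mul_zero]

lemma sum_sum_mul_eq_zero_of_col {x : ι → ℝ} (y : τ → ℝ) {f : ι → τ → ℝ}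
    (h : ∀ k, ∑ j, x j * f j k = 0) (g : τ → ℝ) :
    ∑ j, ∑ k, x j * y k * (f j k * g k) = 0 := by
  rw [sum_comm]
  refine sum_eq_zero fun k _ => ?_
  calc ∑ j, x j * y k * (f j k * g k) = y k * g k * ∑ j, x j * f j k := by
        rw [mul_sum]; exact sum_congr rfl fun j _ => by ring
    _ = 0 := by rw [h k, mul_zero]

lemma sq_sub_sub_add_le (a b c d : ℝ) :
    (a - b - c + d) ^ 2 ≤ 4 * (a ^ 2 + b ^ 2 + c ^ 2 + d ^ 2) := by
  nlinarith [sq_nonneg (a + b), sq_nonneg (a + c), sq_nonneg (b + d), sq_nonneg (c + d),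
    sq_nonneg (a - d), sq_nonneg (b - c)]

lemma sq_sub_sub_add_le_sum_sum_mul_sq [DecidableEq ι] [DecidableEq τ] {x : ι → ℝ} {y : τ → ℝ}
    (hx : ∀ j, 0 ≤ x j) (hy : ∀ k, 0 ≤ y k) (U : ι → τ → ℝ) {κ : ℝ} (hκ : 0 ≤ κ)
    {j₁ j₂ : ι} (hj : j₁ ≠ j₂) (hxj₁ : κ ≤ x j₁) (hxj₂ : κ ≤ x j₂)
    {k₁ k₂ : τ} (hk : k₁ ≠ k₂) (hyk₁ : κ ≤ y k₁) (hyk₂ : κ ≤ y k₂) :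
    κ ^ 2 * (U j₁ k₁ - U j₁ k₂ - U j₂ k₁ + U j₂ k₂) ^ 2 / 4 ≤
      ∑ j, ∑ k, x j * y k * U j k ^ 2 := by
  have hterm : ∀ j k, 0 ≤ x j * y k * U j k ^ 2 := fun j k => by
    have := hx j; have := hy k; positivity
  have hweight : ∀ j k, κ ≤ x j → κ ≤ y k → κ ^ 2 * U j k ^ 2 ≤ x j * y k * U j k ^ 2 :=
    fun j k hj hk => mul_le_mul_of_nonneg_right (by rw [sq]; exact mul_le_mul hj hk hκ (hx j))
      (sq_nonneg _)
  have hblock : ∑ j ∈ {j₁, j₂}, ∑ k ∈ {k₁, k₂}, x j * y k * U j k ^ 2 ≤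
      ∑ j, ∑ k, x j * y k * U j k ^ 2 :=
    (sum_le_sum fun j _ => sum_le_univ_sum_of_nonneg (hterm j)).trans
      (sum_le_univ_sum_of_nonneg fun j => sum_nonneg fun k _ => hterm j k)
  rw [sum_pair hj, sum_pair hk, sum_pair hk] at hblock
  nlinarith [sq_sub_sub_add_le (U j₁ k₁) (U j₁ k₂) (U j₂ k₁) (U j₂ k₂), sq_nonneg κ,
    hweight _ _ hxj₁ hyk₁, hweight _ _ hxj₁ hyk₂, hweight _ _ hxj₂ hyk₁, hweight _ _ hxj₂ hyk₂]

end WeightedSums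

theorem Cfun_neg_eq_sum_sum_mul_sq {n m : ℕ} (A : Matrix (Fin n) (Fin m) ℝ) {x : Fin n → ℝ}
    {y : Fin m → ℝ} (hx : ∑ j, x j = 1) (hy : ∑ k, y k = 1) :
    Cfun A (-A) x y = ∑ j, ∑ k, x j * y k *
      (A j k - (A *ᵥ y) j - (Aᵀ *ᵥ x) k + x ⬝ᵥ (A *ᵥ y)) ^ 2 := by
  set r := A *ᵥ y
  set c := Aᵀ *ᵥ x
  set v := x ⬝ᵥ r
  have hr : ∀ j, ∑ k, y k * A j k = r j := fun j => by
    simp only [r, mulVec, dotProduct, mul_comm]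
  have hc : ∀ k, ∑ j, x j * A j k = c k := fun k => by
    simp only [c, mulVec, dotProduct, transpose_apply, mul_comm]
  have hrow : ∀ j, ∑ k, y k * (A j k - r j) = 0 := fun j => by
    simp only [mul_sub, sum_sub_distrib, hr, ← sum_mul, hy, one_mul, sub_self]
  have hcol : ∀ k, ∑ j, x j * (A j k - r j - c k + v) = 0 := fun k => by
    simp only [mul_add, mul_sub, sum_add_distrib, sum_sub_distrib, hc, ← sum_mul, hx, one_mul]
    simp only [v, dotProduct]
    ring
  -- `(A - r)(A - c) = u² + (A - r)(r - v) + u(c - v)`: the rows of `A - r` are `y`-centred and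
  -- the columns of `u` are `x`-centred, so the last two terms average out.
  have hsplit : Cfun A (-A) x y =
      ∑ j, ∑ k, x j * y k * (A j k - r j - c k + v) ^ 2 +
      ∑ j, ∑ k, x j * y k * ((A j k - r j) * (r j - v)) +
      ∑ j, ∑ k, x j * y k * ((A j k - r j - c k + v) * (c k - v)) := by
    simp only [Cfun, ← sum_add_distrib, ← sum_neg_distrib, Matrix.neg_apply, transpose_neg,
      neg_mulVec, Pi.neg_apply, r, c]
    exact sum_congr rfl fun j _ => sum_congr rfl fun k _ => by ring
  rw [hsplit, sum_sum_mul_eq_zero_of_row x hrow, sum_sum_mul_eq_zero_of_col y hcol, add_zero,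
    add_zero]

theorem sq_sub_sub_add_le_Cfun_neg {n m : ℕ} (A : Matrix (Fin n) (Fin m) ℝ) {x : Fin n → ℝ}
    {y : Fin m → ℝ} (hx : x ∈ stdSimplex ℝ (Fin n)) (hy : y ∈ stdSimplex ℝ (Fin m))
    {κ : ℝ} (hκ : 0 ≤ κ)
    {j₁ j₂ : Fin n} (hj : j₁ ≠ j₂) (hxj₁ : κ ≤ x j₁) (hxj₂ : κ ≤ x j₂)
    {k₁ k₂ : Fin m} (hk : k₁ ≠ k₂) (hyk₁ : κ ≤ y k₁) (hyk₂ : κ ≤ y k₂) :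
    κ ^ 2 * (A j₁ k₁ - A j₁ k₂ - A j₂ k₁ + A j₂ k₂) ^ 2 / 4 ≤ Cfun A (-A) x y := by
  rw [Cfun_neg_eq_sum_sum_mul_sq A hx.2 hy.2]
  convert sq_sub_sub_add_le_sum_sum_mul_sq hx.1 hy.1 _ hκ hj hxj₁ hxj₂ hk hyk₁ hyk₂ using 3
  ring

section Triviality

variable {I J : Type*} [Fintype I] [Fintype J] [Nonempty I] [Nonempty J]

lemma iSup_sub_iInf_nonneg {α : Type*} [Finite α] [Nonempty α] (f : α → ℝ) :
    0 ≤ (⨆ p, f p) - ⨅ p, f p :=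
  sub_nonneg.2 (ciInf_le_ciSup (Set.finite_range f).bddBelow (Set.finite_range f).bddAbove)

lemma ctriv_le_of_abs_le (M : Matrix I J ℝ) (a : I → ℝ) (b : J → ℝ) {ε : ℝ}
    (h : ∀ j k, |M j k - a j - b k| ≤ ε) : ctriv M ≤ 2 * ε := by
  have hsup : (⨆ p : I × J, M p.1 p.2 - a p.1 - b p.2) ≤ ε :=
    ciSup_le fun p => (abs_le.1 (h p.1 p.2)).2
  have hinf : -ε ≤ ⨅ p : I × J, M p.1 p.2 - a p.1 - b p.2 :=
    le_ciInf fun p => (abs_le.1 (h p.1 p.2)).1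
  calc ctriv M
      ≤ ⨅ b' : J → ℝ, (⨆ p : I × J, M p.1 p.2 - a p.1 - b' p.2) -
          ⨅ p : I × J, M p.1 p.2 - a p.1 - b' p.2 :=
        ciInf_le ⟨0, by rintro _ ⟨a', rfl⟩; exact le_ciInf fun _ => iSup_sub_iInf_nonneg _⟩ a
    _ ≤ (⨆ p : I × J, M p.1 p.2 - a p.1 - b p.2) - ⨅ p : I × J, M p.1 p.2 - a p.1 - b p.2 :=
        ciInf_le ⟨0, by rintro _ ⟨b', rfl⟩; exact iSup_sub_iInf_nonneg _⟩ b
    _ ≤ 2 * ε := by linarith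

end Triviality

lemma ctriv_le_abs_sub_sub_add_div_two (M : Matrix (Fin 2) (Fin 2) ℝ) :
    ctriv M ≤ |M 0 0 - M 0 1 - M 1 0 + M 1 1| / 2 := by
  set d := M 0 0 - M 0 1 - M 1 0 + M 1 1
  have hresidual : ∀ j k,
      |M j k - ![M 0 0 - d / 4, M 1 0 + d / 4] j - ![0, M 0 1 - M 0 0 + d / 2] k| ≤ |d| / 4 := by
    intro j k
    rw [abs_le]
    fin_cases j <;> fin_cases k <;>
      simp only [Fin.zero_eta, Fin.mk_one, Fin.isValue, cons_val_zero, cons_val_one,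
        cons_val_fin_one] <;>
      constructor <;> linarith [le_abs_self d, neg_abs_le d]
  linarith [ctriv_le_of_abs_le M _ _ hresidual]

theorem Eset_uncontrollable_general
    (n m : ℕ)
    (A : Matrix (Fin n) (Fin m) ℝ)
    (α1 : ℝ) (hα1 : IsLeast (subTrivSet A) α1) (hα1pos : 0 < α1)
    (κ : ℝ) (hκ0 : 0 < κ) :
    ∀ xy ∈ Eset (n := n) (m := m) κ, κ^2 * α1^2 / 2 ≤ Cfun A (-A) xy.1 xy.2 := by
  rintro ⟨x, y⟩ ⟨⟨hx, hy⟩, ⟨j₁, j₂, hj, hxj₁, hxj₂⟩, ⟨k₁, k₂, hk, hyk₁, hyk₂⟩⟩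
  set d := A j₁ k₁ - A j₁ k₂ - A j₂ k₁ + A j₂ k₂
  have hα1d : α1 ≤ |d| / 2 :=
    (hα1.2 ⟨j₁, j₂, k₁, k₂, hj, hk, rfl⟩).trans
      (by simpa using ctriv_le_abs_sub_sub_add_div_two (A.submatrix ![j₁, j₂] ![k₁, k₂]))
  have hα1sq : α1 ^ 2 ≤ d ^ 2 / 4 := by
    rw [← sq_abs d]; nlinarith
  calc κ ^ 2 * α1 ^ 2 / 2 ≤ κ ^ 2 * α1 ^ 2 := half_le_self (by positivity)
    _ ≤ κ ^ 2 * d ^ 2 / 4 := by rw [mul_div_assoc]; gcongr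
    _ ≤ Cfun A (-A) x y :=
      sq_sub_sub_add_le_Cfun_neg A hx hy hκ0.le hj hxj₁.le hxj₂.le hk hyk₁.le hyk₂.le

/-- E^kappa_{2,2} is uncontrollable in non-2x2-trivial zero-sum games. -/
theorem Eset_uncontrollable
    (n m : ℕ) (hn : 2 ≤ n) (hm : 2 ≤ m)
    (A : Matrix (Fin n) (Fin m) ℝ) (hA : ∀ j k, A j k ∈ Set.Icc (-1 : ℝ) 1)
    (α1 : ℝ) (hα1 : IsLeast (subTrivSet A) α1) (hα1pos : 0 < α1)
    (κ : ℝ) (hκ0 : 0 < κ) (hκ : κ < 1 / 2) :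
    ∀ xy ∈ Eset (n := n) (m := m) κ, κ^2 * α1^2 / 2 ≤ Cfun A (-A) xy.1 xy.2 :=
  Eset_uncontrollable_general n m A α1 hα1 hα1pos κ hκ0
end

section
/- For z > 0, define the set S(z) = { (p,q) in R^2 x R^2 : |p_1| <= 1/z, |q_1| <= 1/z, |p_2| <= sqrt(z), |q_2| <= sqrt(z) }. Then the Lebesgue volume of S(z) equals 16/z, which tends to 0 as z tends to infinity, while the l2-diameter of the primal image G(S(z)) tends to 2 as z tends to infinity (G(S(z)) contains points converging to ((0,1),(0,1)) and to ((1,0),(1,0))). Hence volume contraction in the dual space does not imply that the primal image has small diameter. -/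
open MeasureTheory Filter

/-!
The set `S z` is a product of two boxes with sides `2 / z` and `2 √z`, so its volume is
`(4 √z / z) ^ 2 = 16 / z`. Its long sides, however, let the logit `p₁ - p₂` run over `[-√z, √z]`:
the points `((0, ∓√z), (0, ∓√z))` lie in `S z` and are mapped by the softmax to
`((σ (±√z), σ (∓√z)), (σ (±√z), σ (∓√z)))`, which tend to the opposite vertices
`((1, 0), (1, 0))` and `((0, 1), (0, 1))` at distance `2`. Since probability vectors satisfy
`∑ (xⱼ - yⱼ)² ≤ ∑ xⱼ + ∑ yⱼ = 2`, no two points of the image are farther apart than `2`.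
-/

open Real Set

section Softmax

variable {d : ℕ}

lemma softmax_nonneg (p : Fin d → ℝ) (j : Fin d) : 0 ≤ softmax p j := by
  unfold softmax
  positivity

lemma softmax_le_one (p : Fin d → ℝ) (j : Fin d) : softmax p j ≤ 1 :=
  div_le_one_of_le₀ (Finset.single_le_sum (fun l _ => (exp_pos (p l)).le) (Finset.mem_univ j))
    (Finset.sum_nonneg fun l _ => (exp_pos (p l)).le)

lemma sum_softmax_le_one (p : Fin d → ℝ) : ∑ j, softmax p j ≤ 1 := by
  unfold softmax
  rw [← Finset.sum_div]
  exact div_self_le_one _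

lemma sum_sq_sub_softmax_le_two (p q : Fin d → ℝ) :
    ∑ j, (softmax p j - softmax q j) ^ 2 ≤ 2 := by
  have hterm : ∀ j, (softmax p j - softmax q j) ^ 2 ≤ softmax p j + softmax q j := fun j => by
    nlinarith [softmax_nonneg p j, softmax_le_one p j, softmax_nonneg q j, softmax_le_one q j]
  calc ∑ j, (softmax p j - softmax q j) ^ 2
      ≤ ∑ j, (softmax p j + softmax q j) := Finset.sum_le_sum fun j _ => hterm j
    _ = ∑ j, softmax p j + ∑ j, softmax q j := Finset.sum_add_distrib
    _ ≤ 2 := by linarith [sum_softmax_le_one p, sum_softmax_le_one q]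

lemma softmax_fin_two_zero (p : Fin 2 → ℝ) : softmax p 0 = sigmoid (p 0 - p 1) := by
  rw [softmax, Fin.sum_univ_two, sigmoid_def, neg_sub, exp_sub]
  field_simp

lemma softmax_fin_two_one (p : Fin 2 → ℝ) : softmax p 1 = 1 - sigmoid (p 0 - p 1) := by
  rw [← sigmoid_neg, neg_sub, softmax, Fin.sum_univ_two, sigmoid_def, neg_sub, exp_sub]
  field_simp
  ring

end Softmax

section Diameter

variable {n m : ℕ}

lemma dist2_G_le_two (a b : (Fin n → ℝ) × (Fin m → ℝ)) : dist2 (G a) (G b) ≤ 2 := by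
  have h4 : (∑ j, (softmax a.1 j - softmax b.1 j) ^ 2) +
      ∑ k, (softmax a.2 k - softmax b.2 k) ^ 2 ≤ 2 ^ 2 := by
    linarith [sum_sq_sub_softmax_le_two a.1 b.1, sum_sq_sub_softmax_le_two a.2 b.2]
  exact (sqrt_le_left zero_le_two).2 h4

lemma diam2_image_G_le_two (T : Set ((Fin n → ℝ) × (Fin m → ℝ))) : diam2 (G '' T) ≤ 2 := by
  refine Real.sSup_le ?_ zero_le_two
  rintro _ ⟨_, ⟨a, -, rfl⟩, _, ⟨b, -, rfl⟩, rfl⟩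
  exact dist2_G_le_two a b

lemma dist2_G_le_diam2_image {T : Set ((Fin n → ℝ) × (Fin m → ℝ))}
    {a b : (Fin n → ℝ) × (Fin m → ℝ)} (ha : a ∈ T) (hb : b ∈ T) :
    dist2 (G a) (G b) ≤ diam2 (G '' T) := by
  refine le_csSup ⟨2, ?_⟩ ⟨G a, mem_image_of_mem G ha, G b, mem_image_of_mem G hb, rfl⟩
  rintro _ ⟨_, ⟨a, -, rfl⟩, _, ⟨b, -, rfl⟩, rfl⟩
  exact dist2_G_le_two a b

lemma dist2_G_diag_fin_two (p q : Fin 2 → ℝ) :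
    dist2 (G (p, p)) (G (q, q)) = 2 * |sigmoid (p 0 - p 1) - sigmoid (q 0 - q 1)| := by
  simp only [dist2, G, Fin.sum_univ_two, softmax_fin_two_zero, softmax_fin_two_one]
  rw [← sqrt_sq (by positivity : 0 ≤ 2 * |sigmoid (p 0 - p 1) - sigmoid (q 0 - q 1)|)]
  congr 1
  rw [mul_pow, sq_abs]
  ring

end Diameter

section DualBox

lemma mem_Icc_neg_iff_abs_le {ι : Type*} {x c : ι → ℝ} : x ∈ Icc (-c) c ↔ ∀ i, |x i| ≤ c i := by
  simp only [mem_Icc, Pi.le_def, Pi.neg_apply, abs_le, forall_and]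

lemma volume_Icc_neg {ι : Type*} [Fintype ι] (c : ι → ℝ) :
    volume (Icc (-c) c) = ∏ i, ENNReal.ofReal (2 * c i) := by
  simp only [Real.volume_Icc_pi, Pi.neg_apply, sub_neg_eq_add, two_mul]

def dualBox (a b : ℝ) : Set ((Fin 2 → ℝ) × (Fin 2 → ℝ)) :=
  {pq | |pq.1 0| ≤ a ∧ |pq.2 0| ≤ a ∧ |pq.1 1| ≤ b ∧ |pq.2 1| ≤ b}

lemma dualBox_eq_Icc_prod_Icc (a b : ℝ) :
    dualBox a b = Icc (-![a, b]) ![a, b] ×ˢ Icc (-![a, b]) ![a, b] := by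
  ext ⟨p, q⟩
  simp only [dualBox, mem_ofPred_eq, mem_prod, mem_Icc_neg_iff_abs_le, Fin.forall_fin_two,
    Matrix.cons_val_zero, Matrix.cons_val_one]
  tauto

lemma volume_dualBox {a b : ℝ} (ha : 0 ≤ a) (hb : 0 ≤ b) :
    volume (dualBox a b) = ENNReal.ofReal ((4 * a * b) ^ 2) := by
  rw [dualBox_eq_Icc_prod_Icc, Measure.volume_eq_prod, Measure.prod_prod, volume_Icc_neg,
    Fin.prod_univ_two, Matrix.cons_val_zero, Matrix.cons_val_one,
    ← ENNReal.ofReal_mul (by positivity), ← ENNReal.ofReal_mul (by positivity)]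
  congr 1
  simp only [Matrix.cons_val_fin_one]
  ring

lemma diag_mem_dualBox {a b t : ℝ} (ha : 0 ≤ a) (ht : |t| ≤ b) :
    (![0, t], ![0, t]) ∈ dualBox a b := by
  simp [dualBox, ha, ht]

end DualBox

/-- Dual volume contraction does not imply small primal diameter. -/
theorem dual_contraction_not_primal_stability
    (S : ℝ → Set ((Fin 2 → ℝ) × (Fin 2 → ℝ)))
    (hS : ∀ z : ℝ, S z = {pq | |pq.1 0| ≤ 1 / z ∧ |pq.2 0| ≤ 1 / z ∧
      |pq.1 1| ≤ Real.sqrt z ∧ |pq.2 1| ≤ Real.sqrt z}) :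
    (∀ z : ℝ, 0 < z → volume (S z) = ENNReal.ofReal (16 / z)) ∧
    Tendsto (fun z : ℝ => volume (S z)) atTop (nhds 0) ∧
    Tendsto (fun z : ℝ => diam2 (G '' S z)) atTop (nhds 2) := by
  obtain rfl : S = fun z => dualBox (1 / z) √z := funext hS
  have hvol : ∀ z : ℝ, 0 < z → volume (dualBox (1 / z) √z) = ENNReal.ofReal (16 / z) := by
    intro z hz
    rw [volume_dualBox (by positivity) (sqrt_nonneg z), mul_pow, mul_pow, sq_sqrt hz.le]
    congr 1
    field_simp
    ring
  refine ⟨hvol, ?_, ?_⟩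
  · have h : Tendsto (fun z : ℝ => ENNReal.ofReal (16 / z)) atTop (nhds 0) := by
      simpa using ENNReal.tendsto_ofReal (tendsto_const_nhds.div_atTop tendsto_id)
    exact h.congr' ((eventually_gt_atTop 0).mono fun z hz => (hvol z hz).symm)
  · have hlower : ∀ z > 0,
        2 * |sigmoid √z - sigmoid (-√z)| ≤ diam2 (G '' dualBox (1 / z) √z) := by
      intro z hz
      have hmem : ∀ t, |t| ≤ √z → (![0, t], ![0, t]) ∈ dualBox (1 / z) √z :=
        fun t ht => diag_mem_dualBox (by positivity) ht
      have habs : |√z| = √z := abs_of_nonneg (sqrt_nonneg z)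
      simpa using (dist2_G_diag_fin_two ![0, -√z] ![0, √z]).symm.trans_le
        (dist2_G_le_diam2_image (hmem _ (by rw [abs_neg, habs])) (hmem _ habs.le))
    have hlim : Tendsto (fun z => 2 * |sigmoid √z - sigmoid (-√z)|) atTop (nhds 2) := by
      have hpos := tendsto_sigmoid_atTop.comp tendsto_sqrt_atTop
      have hneg := tendsto_sigmoid_atBot.comp (tendsto_neg_atTop_atBot.comp tendsto_sqrt_atTop)
      simpa using ((hpos.sub hneg).abs.const_mul 2)
    exact tendsto_of_tendsto_of_tendsto_of_le_of_le' hlim tendsto_const_nhds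
      ((eventually_gt_atTop 0).mono hlower) (Eventually.of_forall fun z => diam2_image_G_le_two _)
end

section
/- Let (A,-A) be a two-person zero-sum game and (x,y) in Delta = Delta^n x Delta^m. Define Z_{jk} := A_{jk} - [A y]_j - [A^T x]_k and Zbar := sum_{j in S1} sum_{k in S2} x_j y_k Z_{jk}. Then C_{(A,-A)}(x,y) = sum_{j in S1} sum_{k in S2} x_j y_k (Z_{jk} - Zbar)^2; that is, C_{(A,-A)}(x,y) equals the variance of the random variable taking value Z_{jk} with probability x_j y_k. In particular, C_{(A,-A)}(x,y) >= 0 for every (x,y) in Delta. -/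
open MeasureTheory Filter

open Matrix

section ProductWeights

variable {ι κ : Type*} [Fintype ι] [Fintype κ] (A : Matrix ι κ ℝ) (x : ι → ℝ) (y : κ → ℝ)

theorem sum_sum_mul_mul_eq_mul_sum (f : ι → ℝ) (g : κ → ℝ) :
    ∑ j, ∑ k, x j * y k * (f j * g k) = (∑ j, x j * f j) * ∑ k, y k * g k := by
  rw [Finset.sum_mul_sum]
  exact Finset.sum_congr rfl fun j _ => Finset.sum_congr rfl fun k _ => by ring

variable {x y}

theorem sum_sum_mul_sub_mulVec_mul_eq_zero (hy : ∑ k, y k = 1) (f : ι → ℝ) :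
    ∑ j, ∑ k, x j * y k * ((A j k - (A *ᵥ y) j) * f j) = 0 := by
  refine Finset.sum_eq_zero fun j _ => ?_
  have hrow : ∑ k, y k * (A j k - (A *ᵥ y) j) = 0 := by
    simp only [mul_sub, Finset.sum_sub_distrib, ← Finset.sum_mul, hy, one_mul, sub_eq_zero]
    simp only [mulVec, dotProduct, mul_comm]
  calc ∑ k, x j * y k * ((A j k - (A *ᵥ y) j) * f j)
      = x j * f j * ∑ k, y k * (A j k - (A *ᵥ y) j) := by
        rw [Finset.mul_sum]
        exact Finset.sum_congr rfl fun k _ => by ring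
    _ = 0 := by rw [hrow, mul_zero]

theorem sum_sum_mul_sub_transpose_mulVec_mul_eq_zero (hx : ∑ j, x j = 1) (g : κ → ℝ) :
    ∑ j, ∑ k, x j * y k * ((A j k - (Aᵀ *ᵥ x) k) * g k) = 0 := by
  rw [Finset.sum_comm, ← sum_sum_mul_sub_mulVec_mul_eq_zero Aᵀ hx g]
  exact Finset.sum_congr rfl fun k _ => Finset.sum_congr rfl fun j _ => by
    simp only [transpose_apply]; ring

theorem sum_sum_mul_sub_mulVec_sub_transpose_mulVec (hx : ∑ j, x j = 1)
    (hy : ∑ k, y k = 1) :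
    ∑ j, ∑ k, x j * y k * (A j k - (A *ᵥ y) j - (Aᵀ *ᵥ x) k) = -(x ⬝ᵥ A *ᵥ y) := by
  have hsplit : ∀ j k, x j * y k * (A j k - (A *ᵥ y) j - (Aᵀ *ᵥ x) k) =
      x j * y k * ((A j k - (A *ᵥ y) j) * (1 : ι → ℝ) j)
        - x j * y k * ((1 : ι → ℝ) j * (Aᵀ *ᵥ x) k) :=
    fun j k => by simp only [Pi.one_apply]; ring
  simp only [hsplit, Finset.sum_sub_distrib]
  rw [sum_sum_mul_sub_mulVec_mul_eq_zero A hy, sum_sum_mul_mul_eq_mul_sum]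
  simp only [Pi.one_apply, mul_one, hx, one_mul, zero_sub]
  exact congrArg Neg.neg (dotProduct_transpose_mulVec A y x)

/- With `a = A y`, `b = Aᵀ x` and `v = xᵀ A y`, the centred variable is both
`(A - a) - (b - v)` and `(A - b) - (a - v)`. Multiplying the two forms, every cross term
vanishes: `A - a` has mean zero in each row, `A - b` in each column, and `b - v` under `y`. -/
theorem sum_sum_mul_sub_mulVec_sub_transpose_mulVec_add_sq (hx : ∑ j, x j = 1)
    (hy : ∑ k, y k = 1) :
    ∑ j, ∑ k, x j * y k * (A j k - (A *ᵥ y) j - (Aᵀ *ᵥ x) k + x ⬝ᵥ A *ᵥ y) ^ 2 =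
      ∑ j, ∑ k, x j * y k * ((A j k - (A *ᵥ y) j) * (A j k - (Aᵀ *ᵥ x) k)) := by
  set a := A *ᵥ y
  set b := Aᵀ *ᵥ x
  set v := x ⬝ᵥ a
  have hbv : ∑ k, y k * (b k - v) = 0 := by
    simp only [mul_sub, Finset.sum_sub_distrib, ← Finset.sum_mul, hy, one_mul, sub_eq_zero]
    exact dotProduct_transpose_mulVec A y x
  have hexpand : ∀ j k, x j * y k * (A j k - a j - b k + v) ^ 2 =
      x j * y k * ((A j k - a j) * (A j k - b k)) - x j * y k * ((A j k - a j) * (a j - v))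
        - x j * y k * ((A j k - b k) * (b k - v)) + x j * y k * ((a j - v) * (b k - v)) :=
    fun j k => by ring
  have hrow : ∑ j, ∑ k, x j * y k * ((A j k - a j) * (a j - v)) = 0 :=
    sum_sum_mul_sub_mulVec_mul_eq_zero A hy _
  have hcol : ∑ j, ∑ k, x j * y k * ((A j k - b k) * (b k - v)) = 0 :=
    sum_sum_mul_sub_transpose_mulVec_mul_eq_zero A hx _
  simp only [hexpand, Finset.sum_add_distrib, Finset.sum_sub_distrib, hrow, hcol,
    sum_sum_mul_mul_eq_mul_sum, hbv, mul_zero, sub_zero, add_zero]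

end ProductWeights

theorem Cfun_neg_eq_sum {n m : ℕ} (A : Matrix (Fin n) (Fin m) ℝ) (x : Fin n → ℝ)
    (y : Fin m → ℝ) :
    Cfun A (-A) x y =
      ∑ j, ∑ k, x j * y k * ((A j k - (A *ᵥ y) j) * (A j k - (Aᵀ *ᵥ x) k)) := by
  simp only [Cfun, transpose_neg, neg_mulVec, Matrix.neg_apply, Pi.neg_apply,
    ← Finset.sum_neg_distrib]
  exact Finset.sum_congr rfl fun j _ => Finset.sum_congr rfl fun k _ => by ring

theorem Cfun_zerosum_eq_variance_general
    (n m : ℕ)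
    (A : Matrix (Fin n) (Fin m) ℝ)
    (x : Fin n → ℝ) (hx : x ∈ stdSimplex ℝ (Fin n))
    (y : Fin m → ℝ) (hy : y ∈ stdSimplex ℝ (Fin m))
    (Z : Fin n → Fin m → ℝ)
    (hZ : ∀ j k, Z j k = A j k - A.mulVec y j - A.transpose.mulVec x k)
    (Zbar : ℝ) (hZbar : Zbar = ∑ j, ∑ k, x j * y k * Z j k) :
    Cfun A (-A) x y = ∑ j, ∑ k, x j * y k * (Z j k - Zbar)^2 ∧
    0 ≤ Cfun A (-A) x y := by
  obtain ⟨hx0, hx1⟩ := hx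
  obtain ⟨hy0, hy1⟩ := hy
  have hmean : Zbar = -(x ⬝ᵥ A *ᵥ y) := by
    simp only [hZbar, hZ, sum_sum_mul_sub_mulVec_sub_transpose_mulVec A hx1 hy1]
  have hvar : Cfun A (-A) x y = ∑ j, ∑ k, x j * y k * (Z j k - Zbar) ^ 2 := by
    simp only [Cfun_neg_eq_sum, hZ, hmean, sub_neg_eq_add,
      sum_sum_mul_sub_mulVec_sub_transpose_mulVec_add_sq A hx1 hy1]
  refine ⟨hvar, hvar ▸ Finset.sum_nonneg fun j _ => Finset.sum_nonneg fun k _ => ?_⟩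
  exact mul_nonneg (mul_nonneg (hx0 j) (hy0 k)) (sq_nonneg _)

/-- In zero-sum games, C_{(A,-A)}(x,y) is the variance of Z_{jk} under
the product distribution x ⊗ y; in particular it is nonnegative. -/
theorem Cfun_zerosum_eq_variance
    (n m : ℕ) (hn : 2 ≤ n) (hm : 2 ≤ m)
    (A : Matrix (Fin n) (Fin m) ℝ)
    (x : Fin n → ℝ) (hx : x ∈ stdSimplex ℝ (Fin n))
    (y : Fin m → ℝ) (hy : y ∈ stdSimplex ℝ (Fin m))
    (Z : Fin n → Fin m → ℝ)
    (hZ : ∀ j k, Z j k = A j k - A.mulVec y j - A.transpose.mulVec x k)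
    (Zbar : ℝ) (hZbar : Zbar = ∑ j, ∑ k, x j * y k * Z j k) :
    Cfun A (-A) x y = ∑ j, ∑ k, x j * y k * (Z j k - Zbar)^2 ∧
    0 ≤ Cfun A (-A) x y :=
  Cfun_zerosum_eq_variance_general n m A x hx y hy Z hZ Zbar hZbar
end
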